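/- arXiv:2206.05670 — 3 statements merged into one kernel-verified Lean document; each statement's English description precedes it below -/
import Mathlib

section
/- Let g_1, ..., g_n: R^p × R^q → R each be μ-strongly convex in y with ∇_y g_i being L-Lipschitz in x. For points x_1, ..., x_n with mean x̄ = (1/n)Σ_i x_i, let ỹ* = argmin_y (1/n)Σ_i g_i(x_i, y) and y*(x̄) = argmin_y (1/n)Σ_i g_i(x̄, y). Then ‖ỹ* − y*(x̄)‖ ≤ (L/μ)·(1/n) Σ_{i=1}^{n} ‖x_i − x̄‖. -/
/-!
Both points are zeros of sums of gradients: `ỹ` of `T y = ∑ᵢ ∇_y gᵢ(xᵢ, y)` and `y*` of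
`S y = ∑ᵢ ∇_y gᵢ(x̄, y)`. The map `T` is `nμ`-strongly monotone, and a zero of a `c`-strongly
monotone map lies within `‖T b‖ / c` of any point `b`. At `b = y*` we have
`T y* = T y* - S y* = ∑ᵢ (∇_y gᵢ(xᵢ, y*) - ∇_y gᵢ(x̄, y*))`, whose norm is at most
`L ∑ᵢ ‖xᵢ - x̄‖` by the Lipschitz dependence of the gradients on `x`.
-/

open scoped RealInnerProductSpace

section Gradient

variable {E : Type*} [NormedAddCommGroup E] [InnerProductSpace ℝ E] [CompleteSpace E]

theorem HasGradientAt.sum {ι : Type*} {s : Finset ι} {f : ι → E → ℝ} {f' : ι → E} {y : E}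
    (hf : ∀ i ∈ s, HasGradientAt (f i) (f' i) y) :
    HasGradientAt (fun z => ∑ i ∈ s, f i z) (∑ i ∈ s, f' i) y := by
  rw [hasGradientAt_iff_hasFDerivAt, map_sum]
  exact HasFDerivAt.fun_sum fun i hi => (hf i hi).hasFDerivAt

theorem IsLocalMin.hasGradientAt_eq_zero {f : E → ℝ} {f' y : E} (hmin : IsLocalMin f y)
    (hf : HasGradientAt f f' y) : f' = 0 := by
  have hfderiv : InnerProductSpace.toDual ℝ E f' = 0 := hmin.hasFDerivAt_eq_zero hf.hasFDerivAt
  simpa using hfderiv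

end Gradient

section StronglyMonotone

variable {F : Type*} [NormedAddCommGroup F] [InnerProductSpace ℝ F]

def IsStronglyMonotone (c : ℝ) (T : F → F) : Prop :=
  ∀ y z, c * ‖y - z‖ ^ 2 ≤ ⟪T y - T z, y - z⟫

theorem IsStronglyMonotone.sum {ι : Type*} {s : Finset ι} {c : ι → ℝ} {T : ι → F → F}
    (hT : ∀ i ∈ s, IsStronglyMonotone (c i) (T i)) :
    IsStronglyMonotone (∑ i ∈ s, c i) fun y => ∑ i ∈ s, T i y := by
  intro y z
  rw [← Finset.sum_sub_distrib, sum_inner, Finset.sum_mul]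
  exact Finset.sum_le_sum fun i hi => hT i hi y z

theorem IsStronglyMonotone.mul_norm_sub_le_of_eq_zero {c : ℝ} {T : F → F}
    (hT : IsStronglyMonotone c T) {a : F} (ha : T a = 0) (b : F) :
    c * ‖a - b‖ ≤ ‖T b‖ := by
  rcases (norm_nonneg (a - b)).eq_or_lt with hab | hab
  · rw [← hab, mul_zero]
    exact norm_nonneg _
  refine le_of_mul_le_mul_right ?_ hab
  calc c * ‖a - b‖ * ‖a - b‖ = c * ‖a - b‖ ^ 2 := by ring
    _ ≤ ⟪T a - T b, a - b⟫ := hT a b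
    _ = ⟪-T b, a - b⟫ := by rw [ha, zero_sub]
    _ ≤ ‖-T b‖ * ‖a - b‖ := real_inner_le_norm _ _
    _ = ‖T b‖ * ‖a - b‖ := by rw [norm_neg]

end StronglyMonotone

theorem stmt7_general {p q n : ℕ} (hn : 0 < n)
    (g : Fin n → EuclideanSpace ℝ (Fin p) → EuclideanSpace ℝ (Fin q) → ℝ)
    (μ L : ℝ) (hμ : 0 < μ)
    (hdiff : ∀ i x, Differentiable ℝ (g i x))
    (hsc : ∀ i x y z, μ * ‖y - z‖ ^ 2 ≤ ⟪gradient (g i x) y - gradient (g i x) z, y - z⟫)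
    (hlipx : ∀ i x₁ x₂ y, ‖gradient (g i x₁) y - gradient (g i x₂) y‖ ≤ L * ‖x₁ - x₂‖)
    (x : Fin n → EuclideanSpace ℝ (Fin p))
    (xbar : EuclideanSpace ℝ (Fin p))
    (ytilde ystar : EuclideanSpace ℝ (Fin q))
    (hyt : ∀ y, (n : ℝ)⁻¹ * ∑ i, g i (x i) ytilde ≤ (n : ℝ)⁻¹ * ∑ i, g i (x i) y)
    (hys : ∀ y, (n : ℝ)⁻¹ * ∑ i, g i xbar ystar ≤ (n : ℝ)⁻¹ * ∑ i, g i xbar y) :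
    ‖ytilde - ystar‖ ≤ (L / μ) * ((n : ℝ)⁻¹ * ∑ i, ‖x i - xbar‖) := by
  have hcrit : ∀ (xs : Fin n → EuclideanSpace ℝ (Fin p)) y,
      (∀ z, (n : ℝ)⁻¹ * ∑ i, g i (xs i) y ≤ (n : ℝ)⁻¹ * ∑ i, g i (xs i) z) →
      ∑ i, gradient (g i (xs i)) y = 0 := fun xs y hmin =>
    IsLocalMin.hasGradientAt_eq_zero
      (Filter.Eventually.of_forall fun z => le_of_mul_le_mul_left (hmin z) (by positivity))
      (HasGradientAt.sum fun i _ => (hdiff i (xs i) y).hasGradientAt)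
  have hmono : IsStronglyMonotone (n * μ) fun y => ∑ i, gradient (g i (x i)) y := by
    simpa using IsStronglyMonotone.sum fun i (_ : i ∈ Finset.univ) => hsc i (x i)
  have hdrift : ‖∑ i, gradient (g i (x i)) ystar‖ ≤ L * ∑ i, ‖x i - xbar‖ :=
    calc ‖∑ i, gradient (g i (x i)) ystar‖
        = ‖∑ i, (gradient (g i (x i)) ystar - gradient (g i xbar) ystar)‖ := by
          rw [Finset.sum_sub_distrib, hcrit (fun _ => xbar) ystar hys, sub_zero]
      _ ≤ ∑ i, L * ‖x i - xbar‖ :=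
          (norm_sum_le _ _).trans (Finset.sum_le_sum fun i _ => hlipx i _ _ _)
      _ = L * ∑ i, ‖x i - xbar‖ := Finset.mul_sum .. |>.symm
  have hkey := (hmono.mul_norm_sub_le_of_eq_zero (hcrit x ytilde hyt) ystar).trans hdrift
  rw [div_mul_eq_mul_div, ← mul_assoc, le_div_iff₀ hμ]
  field_simp
  linarith

theorem stmt7 {p q n : ℕ} (hn : 0 < n)
    (g : Fin n → EuclideanSpace ℝ (Fin p) → EuclideanSpace ℝ (Fin q) → ℝ)
    (μ L : ℝ) (hμ : 0 < μ)
    (hdiff : ∀ i x, Differentiable ℝ (g i x))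
    (hsc : ∀ i x y z, μ * ‖y - z‖ ^ 2 ≤ ⟪gradient (g i x) y - gradient (g i x) z, y - z⟫)
    (hlipx : ∀ i x₁ x₂ y, ‖gradient (g i x₁) y - gradient (g i x₂) y‖ ≤ L * ‖x₁ - x₂‖)
    (x : Fin n → EuclideanSpace ℝ (Fin p))
    (xbar : EuclideanSpace ℝ (Fin p)) (hxbar : xbar = (n : ℝ)⁻¹ • ∑ i, x i)
    (ytilde ystar : EuclideanSpace ℝ (Fin q))
    (hyt : ∀ y, (n : ℝ)⁻¹ * ∑ i, g i (x i) ytilde ≤ (n : ℝ)⁻¹ * ∑ i, g i (x i) y)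
    (hys : ∀ y, (n : ℝ)⁻¹ * ∑ i, g i xbar ystar ≤ (n : ℝ)⁻¹ * ∑ i, g i xbar y) :
    ‖ytilde - ystar‖ ≤ (L / μ) * ((n : ℝ)⁻¹ * ∑ i, ‖x i - xbar‖) :=
  stmt7_general hn g μ L hμ hdiff hsc hlipx x xbar ytilde ystar hyt hys
end

section
/- With Q_{k+1} = Q_k W − η R_k, Q_0 = 0, and R_{k+1} = R_k W + (P_{k+1} − P_k)(I − J_n/n) with R_0 = P_0(I − J_n/n) (setting P_{−1} = 0), one has Q_{k+1} = −η Σ_{j=0}^{k} (k+1−j)(P_j − P_{j−1})(W^{k−j} − J_n/n). -/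
/-!
Both recursions are first-order linear recursions `x (k + 1) = x k * W + u (k + 1)`, which unroll
to `x k = ∑ j ≤ k, u j * W ^ (k - j)`. Unrolling `R` and then `Q` gives a double sum
`∑ j ≤ k, ∑ i ≤ j, u i * W ^ (k - i)` whose terms do not depend on `j`, so swapping the two sums
counts each `i` exactly `k + 1 - i` times. Finally `J * W = J` (columns of `W` sum to one)
turns `(1 - J / n) * W ^ m` into `W ^ m - J / n`.
-/

open Finset

theorem Finset.sum_range_succ_sum_range_succ_eq_sum_nsmul {M : Type*} [AddCommMonoid M]
    (g : ℕ → M) (k : ℕ) :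
    ∑ j ∈ range (k + 1), ∑ i ∈ range (j + 1), g i = ∑ i ∈ range (k + 1), (k + 1 - i) • g i := by
  induction k with
  | zero => simp
  | succ k ih =>
    have hcount : ∀ i ∈ range (k + 2), (k + 1 + 1 - i) • g i = (k + 1 - i) • g i + g i := by
      intro i hi
      rw [← succ_nsmul, Nat.sub_add_comm (by simpa [Nat.lt_succ_iff] using hi)]
    rw [sum_range_succ, ih, sum_congr rfl hcount, sum_add_distrib,
      sum_range_succ (fun i => (k + 1 - i) • g i) (k + 1), Nat.sub_self, zero_smul, add_zero]

theorem mul_pow_eq_self_of_mul_eq_self {M : Type*} [Monoid M] {a b : M} (h : b * a = b)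
    (m : ℕ) : b * a ^ m = b := by
  induction m with
  | zero => simp
  | succ m ih => rw [pow_succ, ← mul_assoc, ih, h]

theorem one_sub_mul_pow_of_mul_eq_self {R : Type*} [Ring R] {a b : R} (h : b * a = b)
    (m : ℕ) : (1 - b) * a ^ m = a ^ m - b := by
  rw [sub_mul, one_mul, mul_pow_eq_self_of_mul_eq_self h]

namespace Matrix

variable {m n α : Type*} [Fintype n] [DecidableEq n] [Semiring α]

theorem eq_sum_mul_pow_of_eq_mul_add (x u : ℕ → Matrix m n α) (W : Matrix n n α)
    (h0 : x 0 = u 0) (hsucc : ∀ k, x (k + 1) = x k * W + u (k + 1)) (k : ℕ) :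
    x k = ∑ j ∈ range (k + 1), u j * W ^ (k - j) := by
  induction k with
  | zero => simp [h0]
  | succ k ih =>
    have hshift : ∀ j ∈ range (k + 1), u j * W ^ (k - j) * W = u j * W ^ (k + 1 - j) := by
      intro j hj
      rw [Matrix.mul_assoc, ← pow_succ, Nat.sub_add_comm (by simpa [Nat.lt_succ_iff] using hj)]
    rw [hsucc, ih, Matrix.sum_mul, sum_congr rfl hshift, sum_range_succ _ (k + 1), Nat.sub_self,
      pow_zero, Matrix.mul_one]

theorem eq_sum_nsmul_mul_pow_of_eq_mul_add (x y u : ℕ → Matrix m n α) (W : Matrix n n α)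
    (hx0 : x 0 = 0) (hx : ∀ k, x (k + 1) = x k * W + y k)
    (hy0 : y 0 = u 0) (hy : ∀ k, y (k + 1) = y k * W + u (k + 1)) (k : ℕ) :
    x (k + 1) = ∑ i ∈ range (k + 1), (k + 1 - i) • (u i * W ^ (k - i)) := by
  have hx' := eq_sum_mul_pow_of_eq_mul_add (fun k => x (k + 1)) y W
    (by simp [hx, hx0]) (fun k => hx (k + 1)) k
  have hcombine : ∀ j ∈ range (k + 1),
      y j * W ^ (k - j) = ∑ i ∈ range (j + 1), u i * W ^ (k - i) := by
    intro j hj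
    rw [eq_sum_mul_pow_of_eq_mul_add y u W hy0 hy j, Matrix.sum_mul]
    refine sum_congr rfl fun i hi => ?_
    have hij : i ≤ j := by simpa [Nat.lt_succ_iff] using hi
    have hjk : j ≤ k := by simpa [Nat.lt_succ_iff] using hj
    rw [Matrix.mul_assoc, ← pow_add, add_comm (j - i), Nat.sub_add_sub_cancel hjk hij]
  rw [hx', sum_congr rfl hcombine, sum_range_succ_sum_range_succ_eq_sum_nsmul]

end Matrix

theorem stmt14_general {p n : ℕ} (W J : Matrix (Fin n) (Fin n) ℝ)
    (hJ : J = Matrix.of fun _ _ => (1 : ℝ))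
    (hcol : ∀ j, ∑ i, W i j = 1)
    (η : ℝ) (Q R P : ℕ → Matrix (Fin p) (Fin n) ℝ)
    (hQ0 : Q 0 = 0)
    (hQ : ∀ k, Q (k + 1) = Q k * W - η • R k)
    (hR0 : R 0 = P 0 * (1 - (n : ℝ)⁻¹ • J))
    (hR : ∀ k, R (k + 1) = R k * W + (P (k + 1) - P k) * (1 - (n : ℝ)⁻¹ • J))
    (k : ℕ) :
    Q (k + 1) = -η • ∑ j ∈ Finset.range (k + 1),
      ((k : ℝ) + 1 - j) •
        ((if j = 0 then P 0 else P j - P (j - 1)) * (W ^ (k - j) - (n : ℝ)⁻¹ • J)) := by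
  set D : ℕ → Matrix (Fin p) (Fin n) ℝ := fun j => if j = 0 then P 0 else P j - P (j - 1)
  have hJW : ((n : ℝ)⁻¹ • J) * W = (n : ℝ)⁻¹ • J := by
    subst hJ
    ext i j
    simp [Matrix.mul_apply, ← Finset.mul_sum, hcol]
  have hQ_sum := Matrix.eq_sum_nsmul_mul_pow_of_eq_mul_add Q (fun k => -η • R k)
    (fun i => -η • (D i * (1 - (n : ℝ)⁻¹ • J))) W hQ0
    (fun k => by rw [hQ, sub_eq_add_neg, neg_smul])
    (by simp [D, hR0])
    (fun k => by simp [D, hR, Matrix.smul_mul]) k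
  rw [hQ_sum, smul_sum]
  refine sum_congr rfl fun i hi => ?_
  have hik : i ≤ k + 1 := by simpa using (mem_range.mp hi).le
  rw [← Nat.cast_smul_eq_nsmul ℝ, Nat.cast_sub hik, Matrix.smul_mul, Matrix.mul_assoc,
    one_sub_mul_pow_of_mul_eq_self hJW, smul_comm, Nat.cast_add_one]

theorem stmt14 {p n : ℕ} (hn : 0 < n) (W J : Matrix (Fin n) (Fin n) ℝ)
    (hJ : J = Matrix.of fun _ _ => (1 : ℝ))
    (hsymm : W.IsSymm) (hnonneg : ∀ i j, 0 ≤ W i j)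
    (hrow : ∀ i, ∑ j, W i j = 1) (hcol : ∀ j, ∑ i, W i j = 1)
    (η : ℝ) (Q R P : ℕ → Matrix (Fin p) (Fin n) ℝ)
    (hQ0 : Q 0 = 0)
    (hQ : ∀ k, Q (k + 1) = Q k * W - η • R k)
    (hR0 : R 0 = P 0 * (1 - (n : ℝ)⁻¹ • J))
    (hR : ∀ k, R (k + 1) = R k * W + (P (k + 1) - P k) * (1 - (n : ℝ)⁻¹ • J))
    (k : ℕ) :
    Q (k + 1) = -η • ∑ j ∈ Finset.range (k + 1),
      ((k : ℝ) + 1 - j) •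
        ((if j = 0 then P 0 else P j - P (j - 1)) * (W ^ (k - j) - (n : ℝ)⁻¹ • J)) :=
  stmt14_general W J hJ hcol η Q R P hQ0 hQ hR0 hR k
end

section
/- Let f: R^p → R be L-smooth and let x_{k+1} = x_k − η ĝ_k, where ĝ_k is a random vector with conditional mean m_k = E[ĝ_k | F_k] given the σ-algebra F_k to which x_k is measurable, and 0 < η ≤ 1/L. Then E[‖∇f(x_k)‖²] ≤ (2/η)(E[f(x_k)] − E[f(x_{k+1})]) + E[‖m_k − ∇f(x_k)‖²] + Lη E[‖ĝ_k − m_k‖²]. -/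
/-!
Integrate the descent lemma `f (x - η ĝ) ≤ f x - η ⟪∇f x, ĝ⟫ + L η² / 2 ‖ĝ‖²`. Since `∇f x` is
`F`-measurable, `E ⟪∇f x, ĝ⟫ = E ⟪∇f x, m⟫ = (E ‖∇f x‖² + E ‖m‖² - E ‖m - ∇f x‖²) / 2`, and
`E ‖ĝ‖² = E ‖m‖² + E ‖ĝ - m‖²`. The two `E ‖m‖²` terms combine to `-η (1 - L η) / 2 · E ‖m‖²`,
which is nonpositive because `η ≤ 1 / L`.
-/

open MeasureTheory
open scoped RealInnerProductSpace

section DescentLemma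

variable {E : Type*} [NormedAddCommGroup E] [InnerProductSpace ℝ E] [CompleteSpace E]
  {f : E → ℝ} {L : ℝ}

theorem image_add_le_of_gradient_lipschitz (hdiff : Differentiable ℝ f)
    (hlip : ∀ a b, ‖gradient f a - gradient f b‖ ≤ L * ‖a - b‖) (a v : E) :
    f (a + v) ≤ f a + ⟪gradient f a, v⟫ + L / 2 * ‖v‖ ^ 2 := by
  set φ : ℝ → ℝ := fun t => f (a + t • v) - t * ⟪gradient f a, v⟫ - L / 2 * t ^ 2 * ‖v‖ ^ 2
  have hφ : ∀ t, HasDerivAt φ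
      (⟪gradient f (a + t • v), v⟫ - ⟪gradient f a, v⟫ - L * t * ‖v‖ ^ 2) t := by
    intro t
    have hline : HasDerivAt (fun t : ℝ => a + t • v) v t := by
      simpa using ((hasDerivAt_id t).smul_const v).const_add a
    have hf : HasDerivAt (fun t : ℝ => f (a + t • v)) ⟪gradient f (a + t • v), v⟫ t :=
      (hdiff _).hasGradientAt.hasFDerivAt.comp_hasDerivAt t hline
    refine ((hf.sub ((hasDerivAt_id' t).mul_const ⟪gradient f a, v⟫)).sub
      (((hasDerivAt_pow 2 t).const_mul (L / 2)).mul_const (‖v‖ ^ 2))).congr_deriv ?_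
    push_cast
    ring
  have hanti : AntitoneOn φ (Set.Ici 0) := by
    refine antitoneOn_of_hasDerivWithinAt_nonpos (convex_Ici 0)
      (fun t _ => (hφ t).continuousAt.continuousWithinAt)
      (fun t _ => (hφ t).hasDerivWithinAt) fun t ht => ?_
    rw [interior_Ici, Set.mem_Ioi] at ht
    have hgrad : ‖gradient f (a + t • v) - gradient f a‖ ≤ L * t * ‖v‖ := by
      simpa [norm_smul, abs_of_pos ht, mul_assoc] using hlip (a + t • v) a
    calc ⟪gradient f (a + t • v), v⟫ - ⟪gradient f a, v⟫ - L * t * ‖v‖ ^ 2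
        = ⟪gradient f (a + t • v) - gradient f a, v⟫ - L * t * ‖v‖ ^ 2 := by
          rw [inner_sub_left]
      _ ≤ ‖gradient f (a + t • v) - gradient f a‖ * ‖v‖ - L * t * ‖v‖ * ‖v‖ := by
          rw [sq, ← mul_assoc]; gcongr; exact real_inner_le_norm _ _
      _ ≤ 0 := by nlinarith [norm_nonneg v]
  have := hanti Set.self_mem_Ici (Set.mem_Ici.2 zero_le_one) zero_le_one
  simp only [φ, zero_smul, add_zero, one_smul, zero_mul, sub_zero, one_mul, one_pow] at this
  linarith

end DescentLemma

namespace MeasureTheory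

variable {Ω E : Type*} [NormedAddCommGroup E] [InnerProductSpace ℝ E]
  {m m0 : MeasurableSpace Ω} {μ : Measure Ω} {f g : Ω → E}

theorem MemLp.integrable_inner (hf : MemLp f 2 μ) (hg : MemLp g 2 μ) :
    Integrable (fun ω => ⟪f ω, g ω⟫) μ :=
  (L2.integrable_inner (𝕜 := ℝ) (hf.toLp f) (hg.toLp g)).congr <| by
    filter_upwards [hf.coeFn_toLp, hg.coeFn_toLp] with ω hfω hgω
    rw [hfω, hgω]

theorem integral_norm_sub_sq (hf : MemLp f 2 μ) (hg : MemLp g 2 μ) :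
    ∫ ω, ‖f ω - g ω‖ ^ 2 ∂μ
      = ∫ ω, ‖f ω‖ ^ 2 ∂μ - 2 * ∫ ω, ⟪f ω, g ω⟫ ∂μ + ∫ ω, ‖g ω‖ ^ 2 ∂μ := by
  have hf2 := (memLp_two_iff_integrable_sq_norm hf.1).1 hf
  have hg2 := (memLp_two_iff_integrable_sq_norm hg.1).1 hg
  have hfg := (hf.integrable_inner hg).const_mul 2
  have hsub : Integrable (fun ω => ‖f ω‖ ^ 2 - 2 * ⟪f ω, g ω⟫) μ := hf2.sub hfg
  simp_rw [norm_sub_sq_real]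
  rw [integral_add hsub hg2, integral_sub hf2 hfg, integral_const_mul]

variable [CompleteSpace E] [IsFiniteMeasure μ]

theorem integral_inner_condExp_right (hm : m ≤ m0) {h : Ω → E}
    (hh_meas : AEStronglyMeasurable[m] h μ) (hh : MemLp h 2 μ) (hg : MemLp g 2 μ) :
    ∫ ω, ⟪h ω, (μ[g|m]) ω⟫ ∂μ = ∫ ω, ⟪h ω, g ω⟫ ∂μ := by
  have key := inner_condExpL2_eq_inner_fun (𝕜 := ℝ) hm (hg.toLp g) (hh.toLp h)
    (hh_meas.congr hh.coeFn_toLp.symm)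
  rw [L2.inner_def, L2.inner_def] at key
  calc ∫ ω, ⟪h ω, (μ[g|m]) ω⟫ ∂μ
      = ∫ ω, ⟪(condExpL2 E ℝ hm (hg.toLp g) : Ω → E) ω, (hh.toLp h : Ω → E) ω⟫ ∂μ := by
        refine integral_congr_ae ?_
        filter_upwards [hg.condExpL2_ae_eq_condExp (𝕜 := ℝ) hm, hh.coeFn_toLp] with ω hgω hhω
        rw [hgω, hhω, real_inner_comm]
    _ = ∫ ω, ⟪(hg.toLp g : Ω → E) ω, (hh.toLp h : Ω → E) ω⟫ ∂μ := key
    _ = ∫ ω, ⟪h ω, g ω⟫ ∂μ := by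
        refine integral_congr_ae ?_
        filter_upwards [hg.coeFn_toLp, hh.coeFn_toLp] with ω hgω hhω
        rw [hgω, hhω, real_inner_comm]

theorem integral_norm_sq_eq_condExp_add_variance (hm : m ≤ m0) (hg : MemLp g 2 μ) :
    ∫ ω, ‖g ω‖ ^ 2 ∂μ = ∫ ω, ‖(μ[g|m]) ω‖ ^ 2 ∂μ + ∫ ω, ‖g ω - (μ[g|m]) ω‖ ^ 2 ∂μ := by
  have hc : MemLp (μ[g|m]) 2 μ := hg.condExp one_le_two
  have hcc : ∫ ω, ⟪g ω, (μ[g|m]) ω⟫ ∂μ = ∫ ω, ‖(μ[g|m]) ω‖ ^ 2 ∂μ :=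
    calc ∫ ω, ⟪g ω, (μ[g|m]) ω⟫ ∂μ = ∫ ω, ⟪(μ[g|m]) ω, g ω⟫ ∂μ :=
          integral_congr_ae (ae_of_all _ fun ω => real_inner_comm _ _)
      _ = ∫ ω, ⟪(μ[g|m]) ω, (μ[g|m]) ω⟫ ∂μ :=
          (integral_inner_condExp_right hm stronglyMeasurable_condExp.aestronglyMeasurable hc hg).symm
      _ = ∫ ω, ‖(μ[g|m]) ω‖ ^ 2 ∂μ := by simp_rw [real_inner_self_eq_norm_sq]
  rw [integral_norm_sub_sq hg hc, hcc]
  ring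

end MeasureTheory

section GradientStep

variable {Ω E : Type*} [NormedAddCommGroup E] [InnerProductSpace ℝ E] [CompleteSpace E]
  {mΩ : MeasurableSpace Ω} {μ : Measure Ω} {f : E → ℝ} {L η : ℝ}

theorem integral_image_sub_smul_le_of_gradient_lipschitz (hdiff : Differentiable ℝ f)
    (hlip : ∀ a b, ‖gradient f a - gradient f b‖ ≤ L * ‖a - b‖) {x g : Ω → E}
    (hfx : Integrable (fun ω => f (x ω)) μ) (hfx' : Integrable (fun ω => f (x ω - η • g ω)) μ)
    (hinner : Integrable (fun ω => ⟪gradient f (x ω), g ω⟫) μ)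
    (hg2 : Integrable (fun ω => ‖g ω‖ ^ 2) μ) :
    ∫ ω, f (x ω - η • g ω) ∂μ ≤ ∫ ω, f (x ω) ∂μ - η * ∫ ω, ⟪gradient f (x ω), g ω⟫ ∂μ
      + L * η ^ 2 / 2 * ∫ ω, ‖g ω‖ ^ 2 ∂μ := by
  have hstep : ∀ ω, f (x ω - η • g ω)
      ≤ f (x ω) - η * ⟪gradient f (x ω), g ω⟫ + L * η ^ 2 / 2 * ‖g ω‖ ^ 2 := by
    intro ω
    have h := image_add_le_of_gradient_lipschitz hdiff hlip (x ω) (-(η • g ω))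
    rw [← sub_eq_add_neg, inner_neg_right, real_inner_smul_right, norm_neg, norm_smul,
      Real.norm_eq_abs, mul_pow, sq_abs] at h
    linarith
  have hrhs : Integrable (fun ω => f (x ω) - η * ⟪gradient f (x ω), g ω⟫) μ :=
    hfx.sub (hinner.const_mul η)
  calc ∫ ω, f (x ω - η • g ω) ∂μ
      ≤ ∫ ω, (f (x ω) - η * ⟪gradient f (x ω), g ω⟫ + L * η ^ 2 / 2 * ‖g ω‖ ^ 2) ∂μ :=
        integral_mono hfx' (hrhs.add (hg2.const_mul _)) hstep
    _ = _ := by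
        rw [integral_add hrhs (hg2.const_mul _), integral_sub hfx (hinner.const_mul η),
          integral_const_mul, integral_const_mul]

end GradientStep

theorem stmt15_general {p : ℕ} {Ω : Type*} [m0 : MeasurableSpace Ω]
    (μ : Measure Ω) [IsProbabilityMeasure μ]
    (F : MeasurableSpace Ω) (hF : F ≤ m0)
    (f : EuclideanSpace ℝ (Fin p) → ℝ) (L η : ℝ)
    (hdiff : Differentiable ℝ f)
    (hlip : ∀ a b, ‖gradient f a - gradient f b‖ ≤ L * ‖a - b‖)
    (hη0 : 0 < η) (hη : η ≤ 1 / L)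
    (x ghat : Ω → EuclideanSpace ℝ (Fin p))
    (hx : StronglyMeasurable[F] x)
    (hghat : Integrable ghat μ)
    (hfx : Integrable (fun ω => f (x ω)) μ)
    (hfx' : Integrable (fun ω => f (x ω - η • ghat ω)) μ)
    (hgrad : Integrable (fun ω => ‖gradient f (x ω)‖ ^ 2) μ)
    (hg2 : Integrable (fun ω => ‖ghat ω‖ ^ 2) μ) :
    ∫ ω, ‖gradient f (x ω)‖ ^ 2 ∂μ ≤
      (2 / η) * ((∫ ω, f (x ω) ∂μ) - ∫ ω, f (x ω - η • ghat ω) ∂μ) +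
        (∫ ω, ‖(μ[ghat|F]) ω - gradient f (x ω)‖ ^ 2 ∂μ) +
        L * η * ∫ ω, ‖ghat ω - (μ[ghat|F]) ω‖ ^ 2 ∂μ := by
  have hL : 0 < L := one_div_pos.mp (hη0.trans_le hη)
  have hLη : L * η ≤ 1 := by rwa [le_div_iff₀ hL, mul_comm] at hη
  have hgrad_cont : Continuous (gradient f) :=
    (LipschitzWith.of_dist_le_mul (K := ⟨L, hL.le⟩) fun a b => by
      rw [dist_eq_norm, dist_eq_norm]; exact hlip a b).continuous
  set m := μ[ghat|F]
  set gx := fun ω => gradient f (x ω)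
  have hgx_meas : StronglyMeasurable[F] gx := hgrad_cont.comp_stronglyMeasurable hx
  have hgx : MemLp gx 2 μ :=
    (memLp_two_iff_integrable_sq_norm (hgx_meas.mono hF).aestronglyMeasurable).2 hgrad
  have hghat2 : MemLp ghat 2 μ := (memLp_two_iff_integrable_sq_norm hghat.1).2 hg2
  have hm : MemLp m 2 μ := hghat2.condExp (m := F) one_le_two
  have hdescent := integral_image_sub_smul_le_of_gradient_lipschitz hdiff hlip hfx hfx'
    (hgx.integrable_inner hghat2) hg2
  have hcross : ∫ ω, ⟪gx ω, ghat ω⟫ ∂μ = ∫ ω, ⟪m ω, gx ω⟫ ∂μ := by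
    rw [← integral_inner_condExp_right hF hgx_meas.aestronglyMeasurable hgx hghat2]
    exact integral_congr_ae (ae_of_all _ fun ω => real_inner_comm _ _)
  have hbias_sq := integral_norm_sub_sq hm hgx
  have hvar_split := integral_norm_sq_eq_condExp_add_variance hF hghat2
  have hM : 0 ≤ ∫ ω, ‖m ω‖ ^ 2 ∂μ := integral_nonneg fun ω => by positivity
  rw [hcross, hvar_split] at hdescent
  have hscaled : η * ∫ ω, ‖gx ω‖ ^ 2 ∂μ ≤ 2 * ((∫ ω, f (x ω) ∂μ) - ∫ ω, f (x ω - η • ghat ω) ∂μ)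
      + η * ∫ ω, ‖m ω - gx ω‖ ^ 2 ∂μ + L * η ^ 2 * ∫ ω, ‖ghat ω - m ω‖ ^ 2 ∂μ := by
    nlinarith [mul_nonneg (mul_nonneg hη0.le (sub_nonneg.2 hLη)) hM]
  refine le_of_mul_le_mul_left (hscaled.trans_eq ?_) hη0
  field_simp
  ring

theorem stmt15 {p : ℕ} {Ω : Type*} [m0 : MeasurableSpace Ω]
    (μ : Measure Ω) [IsProbabilityMeasure μ]
    (F : MeasurableSpace Ω) (hF : F ≤ m0)
    (f : EuclideanSpace ℝ (Fin p) → ℝ) (L η : ℝ)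
    (hdiff : Differentiable ℝ f)
    (hlip : ∀ a b, ‖gradient f a - gradient f b‖ ≤ L * ‖a - b‖)
    (hη0 : 0 < η) (hη : η ≤ 1 / L)
    (x ghat : Ω → EuclideanSpace ℝ (Fin p))
    (hx : StronglyMeasurable[F] x)
    (hghat : Integrable ghat μ)
    (hfx : Integrable (fun ω => f (x ω)) μ)
    (hfx' : Integrable (fun ω => f (x ω - η • ghat ω)) μ)
    (hgrad : Integrable (fun ω => ‖gradient f (x ω)‖ ^ 2) μ)
    (hbias : Integrable (fun ω => ‖(μ[ghat|F]) ω - gradient f (x ω)‖ ^ 2) μ)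
    (hvar : Integrable (fun ω => ‖ghat ω - (μ[ghat|F]) ω‖ ^ 2) μ)
    (hg2 : Integrable (fun ω => ‖ghat ω‖ ^ 2) μ) :
    ∫ ω, ‖gradient f (x ω)‖ ^ 2 ∂μ ≤
      (2 / η) * ((∫ ω, f (x ω) ∂μ) - ∫ ω, f (x ω - η • ghat ω) ∂μ) +
        (∫ ω, ‖(μ[ghat|F]) ω - gradient f (x ω)‖ ^ 2 ∂μ) +
        L * η * ∫ ω, ‖ghat ω - (μ[ghat|F]) ω‖ ^ 2 ∂μ :=
  stmt15_general (m0 := m0) μ F hF f L η hdiff hlip hη0 hη x ghat hx hghat hfx hfx' hgrad hg2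
end
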